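/- arXiv:1902.10852 — 5 statements merged into one kernel-verified Lean document; each statement's English description precedes it below -/
import Mathlib

section
/- Let X be a Banach space and let C be a nonempty bounded, norm-closed, convex, weakly compact subset of X. Then for every Hausdorff locally convex vector topology τ on X weaker than the weak topology σ(X,X*), every nonempty norm-closed, convex, τ-compact subset K of C, and every affine bi-Lipschitz map T : K → K, the map T has a fixed point. -/
/-!
Since `K` is τ-closed and τ is weaker than the weak topology, `K` is a weakly closed subset of the
weakly compact set `C`, hence weakly compact. For affine `T`, the mean `x̄` of the first `n` points
of an orbit satisfies `‖T x̄ - x̄‖ ≤ diam K / n`, so the sets of `1/(n+1)`-approximate fixed points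
are nonempty. They are nested, convex and norm closed, hence weakly closed by Mazur's theorem, and
weak compactness yields a point lying in all of them: a fixed point.
-/

open Filter Topology

noncomputable section

/-- The weak topology σ(X, X*) on a normed space `X`. -/
def weakTopology (X : Type*) [NormedAddCommGroup X] [NormedSpace ℝ X] : TopologicalSpace X :=
  TopologicalSpace.induced (fun x => fun f : X →L[ℝ] ℝ => f x) Pi.topologicalSpace

/-- A map is affine on a convex set `K`. -/
def AffineOn {X : Type*} [NormedAddCommGroup X] [NormedSpace ℝ X] (T : X → X) (K : Set X) : Prop :=
  ∀ x ∈ K, ∀ y ∈ K, ∀ t : ℝ, 0 ≤ t → t ≤ 1 →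
    T (t • x + (1 - t) • y) = t • T x + (1 - t) • T y

/-- A map is bi-Lipschitz on a set `K`. -/
def BiLipschitzOn {X : Type*} [NormedAddCommGroup X] [NormedSpace ℝ X]
    (T : X → X) (K : Set X) : Prop :=
  ∃ c L : ℝ, 0 < c ∧ c ≤ L ∧ ∀ x ∈ K, ∀ y ∈ K,
    c * ‖x - y‖ ≤ ‖T x - T y‖ ∧ ‖T x - T y‖ ≤ L * ‖x - y‖

section OrbitMean

variable {X : Type*} [AddCommGroup X] [Module ℝ X]

def orbitMean (T : X → X) (x : X) (n : ℕ) : X :=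
  (n : ℝ)⁻¹ • ∑ k ∈ Finset.range n, T^[k] x

theorem orbitMean_succ (T : X → X) (x : X) (n : ℕ) :
    orbitMean T x (n + 1) =
      (n / (n + 1) : ℝ) • orbitMean T x n + (1 - n / (n + 1) : ℝ) • T^[n] x := by
  have hn : (n + 1 : ℝ) ≠ 0 := by positivity
  rcases Nat.eq_zero_or_pos n with rfl | hpos
  · simp [orbitMean]
  have hn' : (n : ℝ) ≠ 0 := Nat.cast_ne_zero.mpr hpos.ne'
  simp only [orbitMean, Finset.sum_range_succ, smul_add, smul_smul, Nat.cast_succ]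
  congr 2
  · field_simp
  · field_simp; ring

theorem orbitMean_mem {T : X → X} {K : Set X} (hK : Convex ℝ K) (hT : Set.MapsTo T K K)
    {x : X} (hx : x ∈ K) {n : ℕ} (hn : 0 < n) : orbitMean T x n ∈ K := by
  rw [orbitMean, Finset.smul_sum]
  refine hK.sum_mem (fun _ _ => by positivity) ?_ fun k _ => hT.iterate k hx
  simp [Finset.card_range, (Nat.cast_pos.mpr hn).ne']

theorem orbitMean_map_sub (T : X → X) (x : X) (n : ℕ) :
    orbitMean T (T x) n - orbitMean T x n = (n : ℝ)⁻¹ • (T^[n] x - x) := by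
  simp only [orbitMean, ← smul_sub, ← Finset.sum_sub_distrib, ← Function.iterate_succ_apply,
    Finset.sum_range_sub (fun k => T^[k] x), Function.iterate_zero_apply]

end OrbitMean

section ApproxFixedPoints

variable {X : Type*} [SeminormedAddCommGroup X]

def approxFixedPoints (T : X → X) (K : Set X) (ε : ℝ) : Set X :=
  {x ∈ K | ‖T x - x‖ ≤ ε}

theorem approxFixedPoints_mono (T : X → X) (K : Set X) : Monotone (approxFixedPoints T K) :=
  fun _ _ hεδ _ hx => ⟨hx.1, hx.2.trans hεδ⟩

theorem isClosed_approxFixedPoints {T : X → X} {K : Set X} (hK : IsClosed K)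
    (hT : ContinuousOn T K) (ε : ℝ) : IsClosed (approxFixedPoints T K ε) :=
  ((hT.sub continuousOn_id).norm).preimage_isClosed_of_isClosed hK isClosed_Iic

end ApproxFixedPoints

section WeakTopology

variable {X : Type*} [NormedAddCommGroup X] [NormedSpace ℝ X]

theorem le_weakTopology : (inferInstance : TopologicalSpace X) ≤ weakTopology X :=
  continuous_iff_le_induced.mp <| continuous_pi fun f => f.continuous

theorem t2Space_weakTopology : @T2Space X (weakTopology X) :=
  inferInstanceAs (T2Space (WeakSpace ℝ X))

theorem Convex.isClosed_weakTopology {s : Set X} (hs : Convex ℝ s) (hcl : IsClosed s) :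
    IsClosed[weakTopology X] s := by
  have h := hs.toWeakSpace_closure (𝕜 := ℝ)
  have himage : toWeakSpace ℝ X '' s = s := Set.image_id s
  rw [hcl.closure_eq, himage] at h
  exact (closure_eq_iff_isClosed (X := WeakSpace ℝ X)).mp h.symm

end WeakTopology

section AffineOn

variable {X : Type*} [NormedAddCommGroup X] [NormedSpace ℝ X] {T : X → X} {K : Set X}

theorem BiLipschitzOn.continuousOn (hT : BiLipschitzOn T K) : ContinuousOn T K := by
  obtain ⟨_, L, _, _, hL⟩ := hT
  refine (LipschitzOnWith.of_dist_le' (K := L) fun x hx y hy => ?_).continuousOn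
  simpa only [dist_eq_norm] using (hL x hx y hy).2

theorem AffineOn.map_orbitMean (hT : AffineOn T K) (hK : Convex ℝ K) (hTK : Set.MapsTo T K K)
    {x : X} (hx : x ∈ K) {n : ℕ} (hn : 0 < n) :
    T (orbitMean T x n) = orbitMean T (T x) n := by
  induction n, hn using Nat.le_induction with
  | base => simp [orbitMean]
  | succ n hn ih =>
    have ht₀ : (0 : ℝ) ≤ n / (n + 1) := by positivity
    have ht₁ : (n / (n + 1) : ℝ) ≤ 1 := div_le_one_of_le₀ (by linarith) (by positivity)
    rw [orbitMean_succ, orbitMean_succ,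
      hT _ (orbitMean_mem hK hTK hx hn) _ (hTK.iterate n hx) _ ht₀ ht₁, ih,
      ← Function.iterate_succ_apply' T, Function.iterate_succ_apply]

/-- The displacement at the mean of `n` orbit points is at most `diam K / n`. -/
theorem AffineOn.approxFixedPoints_nonempty (hT : AffineOn T K) (hK : Convex ℝ K)
    (hKb : Bornology.IsBounded K) (hne : K.Nonempty) (hTK : Set.MapsTo T K K) {ε : ℝ}
    (hε : 0 < ε) : (approxFixedPoints T K ε).Nonempty := by
  obtain ⟨x, hx⟩ := hne
  obtain ⟨n, hn⟩ := exists_nat_gt (Metric.diam K / ε)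
  have hn₀ : (0 : ℝ) < n := lt_of_le_of_lt (by positivity) hn
  refine ⟨orbitMean T x n, orbitMean_mem hK hTK hx (Nat.cast_pos.mp hn₀), ?_⟩
  rw [hT.map_orbitMean hK hTK hx (Nat.cast_pos.mp hn₀), orbitMean_map_sub, norm_smul,
    norm_inv, Real.norm_natCast, ← dist_eq_norm, inv_mul_le_iff₀ hn₀]
  calc dist (T^[n] x) x ≤ Metric.diam K := Metric.dist_le_diam_of_mem hKb (hTK.iterate n hx) hx
    _ ≤ n * ε := (div_le_iff₀ hε).mp hn.le

theorem AffineOn.convex_approxFixedPoints (hT : AffineOn T K) (hK : Convex ℝ K) (ε : ℝ) :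
    Convex ℝ (approxFixedPoints T K ε) := by
  intro x hx y hy a b ha hb hab
  obtain rfl : a = 1 - b := by linarith
  refine ⟨hK hx.1 hy.1 ha hb hab, ?_⟩
  have hmap : T ((1 - b) • x + b • y) - ((1 - b) • x + b • y)
      = (1 - b) • (T x - x) + b • (T y - y) := by
    rw [add_comm, hT y hy.1 x hx.1 b hb (by linarith), add_comm]
    module
  calc ‖T ((1 - b) • x + b • y) - ((1 - b) • x + b • y)‖
      ≤ (1 - b) * ‖T x - x‖ + b * ‖T y - y‖ := by
        rw [hmap]
        refine (norm_add_le _ _).trans_eq ?_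
        rw [norm_smul_of_nonneg ha, norm_smul_of_nonneg hb]
    _ ≤ (1 - b) * ε + b * ε := by gcongr; exacts [hx.2, hy.2]
    _ = ε := by ring

theorem AffineOn.exists_fixedPoint (hT : AffineOn T K) (hKw : @IsCompact X (weakTopology X) K)
    (hKb : Bornology.IsBounded K) (hK : Convex ℝ K) (hne : K.Nonempty)
    (hTc : ContinuousOn T K) (hTK : Set.MapsTo T K K) : ∃ x ∈ K, T x = x := by
  have hKcl : IsClosed K := (@IsCompact.isClosed X (weakTopology X) t2Space_weakTopology K
    hKw).mono le_weakTopology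
  set F : ℕ → Set X := fun n => approxFixedPoints T K (1 / (n + 1))
  have hFcl (n : ℕ) : IsClosed[weakTopology X] (F n) :=
    (hT.convex_approxFixedPoints hK _).isClosed_weakTopology
      (isClosed_approxFixedPoints hKcl hTc _)
  obtain ⟨x, hx⟩ := @IsCompact.nonempty_iInter_of_sequence_nonempty_isCompact_isClosed X
    (weakTopology X) F
    (fun n => approxFixedPoints_mono T K (by gcongr; norm_num))
    (fun n => hT.approxFixedPoints_nonempty hK hKb hne hTK (by positivity))
    (@IsCompact.of_isClosed_subset X (weakTopology X) _ _ hKw (hFcl 0) fun _ h => h.1) hFcl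
  have hxF (n : ℕ) : x ∈ F n := Set.mem_iInter.mp hx n
  refine ⟨x, (hxF 0).1, eq_of_forall_dist_le fun ε hε => ?_⟩
  obtain ⟨n, hn⟩ := exists_nat_one_div_lt hε
  rw [dist_eq_norm]
  exact (hxF n).2.trans hn.le

end AffineOn

theorem stmt2_general {X : Type*} [NormedAddCommGroup X] [NormedSpace ℝ X]
    (C : Set X) (hbdd : Bornology.IsBounded C)
    (hwc : @IsCompact X (weakTopology X) C) :
    ∀ τ : TopologicalSpace X,
      @T2Space X τ → @IsTopologicalAddGroup X τ _ → @ContinuousSMul ℝ X _ _ τ →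
      @LocallyConvexSpace ℝ X _ _ _ _ τ →
      (∀ U : Set X, τ.IsOpen U → (weakTopology X).IsOpen U) →
      ∀ K : Set X, K ⊆ C → K.Nonempty → IsClosed K → Convex ℝ K → @IsCompact X τ K →
        ∀ T : X → X, Set.MapsTo T K K → AffineOn T K → BiLipschitzOn T K →
          ∃ x ∈ K, T x = x := by
  intro τ _ _ _ _ hτw K hKC hne hKτ hK _ T hTK hT hTb
  -- `hKτ` is closedness for `τ`, the local instance in the statement.
  have hKw : IsClosed[weakTopology X] K :=
    @IsClosed.mk X (weakTopology X) K (hτw _ hKτ.isOpen_compl)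
  have hKwc : @IsCompact X (weakTopology X) K :=
    @IsCompact.of_isClosed_subset X (weakTopology X) _ _ hwc hKw hKC
  exact hT.exists_fixedPoint hKwc (hbdd.subset hKC) hK hne hTb.continuousOn hTK

/-- if `C` is a nonempty bounded closed convex weakly compact subset of a Banach
space, then for every Hausdorff locally convex vector topology `τ` weaker than the weak
topology, every nonempty closed convex `τ`-compact `K ⊆ C` and every affine bi-Lipschitz
`T : K → K`, the map `T` has a fixed point. -/
theorem stmt2 {X : Type*} [NormedAddCommGroup X] [NormedSpace ℝ X] [CompleteSpace X]
    (C : Set X) (hne : C.Nonempty) (hbdd : Bornology.IsBounded C)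
    (hcl : IsClosed C) (hconv : Convex ℝ C)
    (hwc : @IsCompact X (weakTopology X) C) :
    ∀ τ : TopologicalSpace X,
      @T2Space X τ → @IsTopologicalAddGroup X τ _ → @ContinuousSMul ℝ X _ _ τ →
      @LocallyConvexSpace ℝ X _ _ _ _ τ →
      (∀ U : Set X, τ.IsOpen U → (weakTopology X).IsOpen U) →
      ∀ K : Set X, K ⊆ C → K.Nonempty → IsClosed K → Convex ℝ K → @IsCompact X τ K →
        ∀ T : X → X, Set.MapsTo T K K → AffineOn T K → BiLipschitzOn T K →
          ∃ x ∈ K, T x = x :=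
  stmt2_general C hbdd hwc
end
end

section
/- Let X be a Banach space, let (y_n) be a seminormalized sequence in X, and let G be a subspace of X* that is η-norming for X (0 < η ≤ 1) and satisfies g(y_n) → 0 as n → ∞ for every g ∈ G. Then for every ε ∈ (0,1) there exists an infinite set N ⊆ ℕ such that the subsequence (y_n)_{n∈N} is (1+ε)/η-basic. -/
open Filter Topology

noncomputable section

/-- `(x_n)` is `K`-basic: for all scalars and `n ≤ m`,
`‖∑_{i<n} a_i x_i‖ ≤ K ‖∑_{i<m} a_i x_i‖`. -/
def IsKBasic {X : Type*} [NormedAddCommGroup X] [NormedSpace ℝ X]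
    (K : ℝ) (x : ℕ → X) : Prop :=
  ∀ (a : ℕ → ℝ) (n m : ℕ), n ≤ m →
    ‖∑ i ∈ Finset.range n, a i • x i‖ ≤ K * ‖∑ i ∈ Finset.range m, a i • x i‖

/-- `(y_n)` is seminormalized: `0 < A ≤ ‖y_n‖ ≤ B < ∞` for all `n`. -/
def Seminormalized {X : Type*} [NormedAddCommGroup X] (y : ℕ → X) : Prop :=
  ∃ A B : ℝ, 0 < A ∧ ∀ n, A ≤ ‖y n‖ ∧ ‖y n‖ ≤ B

/-- `G ⊆ X*` is `η`-norming: `η‖x‖ ≤ sup {|φ x| : φ ∈ G, ‖φ‖ ≤ 1} ≤ ‖x‖` for all `x`. -/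
def IsNorming {X : Type*} [NormedAddCommGroup X] [NormedSpace ℝ X]
    (η : ℝ) (G : Submodule ℝ (X →L[ℝ] ℝ)) : Prop :=
  ∀ x : X,
    η * ‖x‖ ≤ sSup {r : ℝ | ∃ φ ∈ G, ‖φ‖ ≤ 1 ∧ r = |φ x|} ∧
    sSup {r : ℝ | ∃ φ ∈ G, ‖φ‖ ≤ 1 ∧ r = |φ x|} ≤ ‖x‖

/-!
Mazur's construction. By compactness of the unit sphere, the span of finitely many vectors is
`(η - δ)`-normed by finitely many functionals of `G`; since every functional of `G` vanishes
along `(y_n)`, one can choose `n₀ < n₁ < ⋯` so that `y_{n_j}` is almost annihilated by all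
the functionals norming the earlier vectors. For the partial sums `S_k` of `∑ a_j y_{n_j}`,
apply the norming functional of the longest partial sum `S_k`, `k ≤ m`: the tail
`∑_{k ≤ j < m} a_j y_{n_j}` contributes at most `δ ‖S_k‖`, as `|a_j| ≤ 2 ‖S_k‖ / A` when
`‖y_n‖ ≥ A`. Hence `(η - 2δ) ‖S_n‖ ≤ (η - 2δ) ‖S_k‖ ≤ ‖S_m‖`, and `δ = εη/4` gives the
constant since `(1 + ε)(1 - ε/2) ≥ 1`.
-/

open Finset Submodule

theorem exists_strictMono_forall_image_range (P : ℕ → Finset ℕ → ℕ → Prop)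
    (hP : ∀ j s, ∀ᶠ m in atTop, P j s m) :
    ∃ φ : ℕ → ℕ, StrictMono φ ∧ ∀ j, P j ((range j).image φ) (φ j) := by
  classical
  have : ∀ j s, ∃ m, (∀ a ∈ s, a < m) ∧ P j s m := fun j s =>
    (((eventually_all_finset s).2 fun a _ => eventually_gt_atTop a).and (hP j s)).exists
  choose next hgt hnext using this
  let T : ℕ → Finset ℕ := fun j => Nat.rec ∅ (fun j s => insert (next j s) s) j
  have hT : ∀ j, T j = (range j).image fun i => next i (T i) := by
    intro j
    induction j with
    | zero => rfl
    | succ j ih => rw [range_add_one, image_insert, ← ih]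
  refine ⟨fun j => next j (T j),
    strictMono_nat_of_lt_succ fun j => hgt (j + 1) (T (j + 1)) _ (mem_insert_self _ _),
    fun j => ?_⟩
  rw [← hT j]
  exact hnext j (T j)

theorem sum_Ico_geometric_two_le (n m : ℕ) : ∑ j ∈ Ico n m, (1 / 2 : ℝ) ^ j ≤ 2 :=
  calc ∑ j ∈ Ico n m, (1 / 2 : ℝ) ^ j ≤ ∑ j ∈ range m, (1 / 2 : ℝ) ^ j :=
        sum_le_sum_of_subset_of_nonneg (range_eq_Ico m ▸ Ico_subset_Ico_left (Nat.zero_le n))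
          fun _ _ _ => by positivity
    _ ≤ 2 := sum_geometric_two_le m

section NormedSpace

variable {X : Type*} [NormedAddCommGroup X] [NormedSpace ℝ X] {x : ℕ → X} {A : ℝ}

theorem IsNorming.exists_mem_lt {η : ℝ} {G : Submodule ℝ (X →L[ℝ] ℝ)} (hG : IsNorming η G)
    (x : X) {δ : ℝ} (hδ : 0 < δ) :
    ∃ g ∈ {g | g ∈ G ∧ ‖g‖ ≤ 1}, η * ‖x‖ - δ < |g x| := by
  have hne : {r : ℝ | ∃ φ ∈ G, ‖φ‖ ≤ 1 ∧ r = |φ x|}.Nonempty :=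
    ⟨0, 0, G.zero_mem, by simp, by simp⟩
  obtain ⟨_, ⟨g, hg, hg1, rfl⟩, hlt⟩ :=
    exists_lt_of_lt_csSup hne ((sub_lt_self _ hδ).trans_le (hG x).1)
  exact ⟨g, ⟨hg, hg1⟩, hlt⟩

theorem exists_finset_norming_of_forall_exists_lt {S : Set (X →L[ℝ] ℝ)} {η : ℝ}
    (hS : ∀ (x : X) {δ : ℝ}, 0 < δ → ∃ g ∈ S, η * ‖x‖ - δ < |g x|)
    (E : Submodule ℝ X) [FiniteDimensional ℝ E] {δ : ℝ} (hδ : 0 < δ) :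
    ∃ F : Finset (X →L[ℝ] ℝ), ↑F ⊆ S ∧ ∀ x ∈ E, ∃ g ∈ F, (η - δ) * ‖x‖ ≤ |g x| := by
  classical
  choose g hgS hg using fun x : X => hS x hδ
  obtain ⟨g₀, hg₀S, -⟩ := hS 0 one_pos
  obtain ⟨t, -, ht⟩ := (isCompact_sphere (0 : E) 1).elim_nhds_subcover
    (fun z => {w : E | η - δ < |g z w|}) fun z hz => by
      refine (isOpen_lt continuous_const
        ((g z).continuous.comp continuous_subtype_val).abs).mem_nhds ?_
      have hz1 : ‖(z : X)‖ = 1 := mem_sphere_zero_iff_norm.1 hz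
      simpa [hz1] using hg z
  refine ⟨insert g₀ (t.image fun z : E => g z), ?_, fun x hx => ?_⟩
  · simp only [coe_insert, coe_image, Set.insert_subset_iff, Set.image_subset_iff]
    exact ⟨hg₀S, fun z _ => hgS z⟩
  rcases eq_or_ne x 0 with rfl | hx0
  · exact ⟨g₀, mem_insert_self _ _, by simp⟩
  have hxpos : 0 < ‖x‖ := norm_pos_iff.2 hx0
  let z : E := ‖x‖⁻¹ • ⟨x, hx⟩
  obtain ⟨w, hwt, hw⟩ := Set.mem_iUnion₂.1 (ht (show z ∈ Metric.sphere 0 1 by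
    simp [z, norm_smul, hxpos.ne']))
  refine ⟨g w, mem_insert_of_mem (mem_image_of_mem _ hwt), ?_⟩
  have hgz : |g w z| = |g w x| / ‖x‖ := by
    simp [z, abs_mul, div_eq_inv_mul]
  have hw : η - δ < |g w z| := hw
  rw [hgz, lt_div_iff₀ hxpos] at hw
  exact hw.le

theorem exists_strictMono_forall_norming {y : ℕ → X} {S : Set (X →L[ℝ] ℝ)}
    (hS0 : ∀ g ∈ S, Tendsto (fun n => g (y n)) atTop (𝓝 0)) {θ : ℝ}
    (hS : ∀ s : Finset ℕ, ∃ F : Finset (X →L[ℝ] ℝ), ↑F ⊆ S ∧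
      ∀ v ∈ span ℝ (y '' s), ∃ g ∈ F, θ * ‖v‖ ≤ |g v|)
    {c : ℕ → ℝ} (hc : ∀ j, 0 < c j) :
    ∃ φ : ℕ → ℕ, StrictMono φ ∧ ∀ n, ∀ v ∈ span ℝ ((y ∘ φ) '' (range n : Set ℕ)),
      ∃ g ∈ S, θ * ‖v‖ ≤ |g v| ∧ ∀ j, n ≤ j → |g (y (φ j))| ≤ c j := by
  choose F hFS hF using hS
  -- quantifying over all `t ⊆ s` makes the condition cover the norming sets of every earlier prefix
  obtain ⟨φ, hφ, hsmall⟩ := exists_strictMono_forall_image_range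
    (fun j s m => ∀ t ∈ s.powerset, ∀ g ∈ F t, |g (y m)| ≤ c j) fun j s => by
      refine (eventually_all_finset _).2 fun t _ => (eventually_all_finset _).2 fun g hg => ?_
      filter_upwards [(hS0 g (hFS t hg)).eventually (Metric.closedBall_mem_nhds 0 (hc j))]
        with m hm
      simpa using hm
  refine ⟨φ, hφ, fun n v hv => ?_⟩
  rw [Set.image_comp, ← coe_image] at hv
  obtain ⟨g, hgF, hg⟩ := hF _ v hv
  exact ⟨g, hFS _ hgF, hg, fun j hnj => hsmall j _
    (mem_powerset.2 (image_subset_image (range_subset_range.2 hnj))) g hgF⟩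

theorem abs_mul_le_norm_sum_range_succ_add (hx : ∀ j, A ≤ ‖x j‖) (a : ℕ → ℝ) (j : ℕ) :
    |a j| * A ≤ ‖∑ i ∈ range (j + 1), a i • x i‖ + ‖∑ i ∈ range j, a i • x i‖ :=
  calc |a j| * A ≤ ‖a j • x j‖ := by rw [norm_smul, Real.norm_eq_abs]; gcongr; exact hx j
    _ = ‖∑ i ∈ range (j + 1), a i • x i - ∑ i ∈ range j, a i • x i‖ := by
      rw [sum_range_succ_sub_sum]
    _ ≤ _ := norm_sub_le _ _

theorem mul_norm_sum_range_le_of_norming {θ β : ℝ} {c : ℕ → ℝ} (hA : 0 < A)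
    (hx : ∀ j, A ≤ ‖x j‖) (hc : ∀ n m, ∑ j ∈ Ico n m, c j ≤ β * A / 2)
    (hnorm : ∀ n, ∀ v ∈ span ℝ (x '' (range n : Set ℕ)),
      ∃ g : X →L[ℝ] ℝ, ‖g‖ ≤ 1 ∧ θ * ‖v‖ ≤ |g v| ∧ ∀ j, n ≤ j → |g (x j)| ≤ c j)
    (a : ℕ → ℝ) {n m : ℕ} (hnm : n ≤ m) :
    (θ - β) * ‖∑ i ∈ range n, a i • x i‖ ≤ ‖∑ i ∈ range m, a i • x i‖ := by
  set S : ℕ → X := fun k => ∑ i ∈ range k, a i • x i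
  obtain ⟨k, hk, hmax⟩ := exists_max_image (range (m + 1)) (fun k => ‖S k‖) nonempty_range_add_one
  have hkm : k ≤ m := Nat.lt_succ_iff.1 (mem_range.1 hk)
  have hSk : S k ∈ span ℝ (x '' (range k : Set ℕ)) :=
    sum_mem fun i hi => smul_mem _ _ (subset_span (Set.mem_image_of_mem _ hi))
  obtain ⟨g, hg1, hgS, hgx⟩ := hnorm k (S k) hSk
  have hcoef : ∀ j ∈ Ico k m, |a j| * |g (x j)| ≤ 2 * ‖S k‖ / A * c j := by
    intro j hj
    obtain ⟨hkj, hjm⟩ := mem_Ico.1 hj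
    have hSj1 := hmax (j + 1) (mem_range.2 (by omega))
    have hSj := hmax j (mem_range.2 (by omega))
    have ha : |a j| ≤ 2 * ‖S k‖ / A := by
      rw [le_div_iff₀ hA]
      linarith [abs_mul_le_norm_sum_range_succ_add hx a j]
    exact mul_le_mul ha (hgx j hkj) (abs_nonneg _) (by positivity)
  have htail : g (S m) = g (S k) + ∑ j ∈ Ico k m, a j * g (x j) := by
    simp only [S, ← sum_range_add_sum_Ico _ hkm, map_add, map_sum, map_smul, smul_eq_mul]
  have hkey : (θ - β) * ‖S k‖ ≤ ‖S m‖ := by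
    have hgm : |g (S m)| ≤ ‖S m‖ :=
      (g.le_opNorm _).trans (mul_le_of_le_one_left (norm_nonneg _) hg1)
    have hsum : |∑ j ∈ Ico k m, a j * g (x j)| ≤ β * ‖S k‖ :=
      calc |∑ j ∈ Ico k m, a j * g (x j)| ≤ ∑ j ∈ Ico k m, |a j| * |g (x j)| := by
            simpa only [abs_mul] using abs_sum_le_sum_abs (fun j => a j * g (x j)) (Ico k m)
        _ ≤ ∑ j ∈ Ico k m, 2 * ‖S k‖ / A * c j := sum_le_sum hcoef
        _ = 2 * ‖S k‖ / A * ∑ j ∈ Ico k m, c j := (mul_sum _ _ _).symm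
        _ ≤ 2 * ‖S k‖ / A * (β * A / 2) := by gcongr; exact hc k m
        _ = β * ‖S k‖ := by field_simp
    have := abs_sub_abs_le_abs_sub (g (S k)) (-∑ j ∈ Ico k m, a j * g (x j))
    rw [sub_neg_eq_add, ← htail, abs_neg] at this
    linarith
  rcases le_total 0 (θ - β) with hθ | hθ
  · exact (mul_le_mul_of_nonneg_left (hmax n (mem_range.2 (by omega))) hθ).trans hkey
  · exact (mul_nonpos_of_nonpos_of_nonneg hθ (norm_nonneg _)).trans (norm_nonneg _)

theorem isKBasic_of_forall_mul_norm_le {K τ : ℝ} (hK : 0 ≤ K) (hKτ : 1 ≤ K * τ)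
    (h : ∀ (a : ℕ → ℝ) n m, n ≤ m →
      τ * ‖∑ i ∈ range n, a i • x i‖ ≤ ‖∑ i ∈ range m, a i • x i‖) :
    IsKBasic K x := fun a n m hnm =>
  calc ‖∑ i ∈ range n, a i • x i‖ ≤ K * τ * ‖∑ i ∈ range n, a i • x i‖ :=
        le_mul_of_one_le_left (norm_nonneg _) hKτ
    _ = K * (τ * ‖∑ i ∈ range n, a i • x i‖) := mul_assoc _ _ _
    _ ≤ K * ‖∑ i ∈ range m, a i • x i‖ := mul_le_mul_of_nonneg_left (h a n m hnm) hK

end NormedSpace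

theorem stmt5_general {X : Type*} [NormedAddCommGroup X] [NormedSpace ℝ X]
    (y : ℕ → X) (hy : Seminormalized y)
    (η : ℝ) (hη0 : 0 < η)
    (G : Submodule ℝ (X →L[ℝ] ℝ)) (hG : IsNorming η G)
    (hG0 : ∀ g ∈ G, Tendsto (fun n => g (y n)) atTop (𝓝 (0:ℝ)))
    (ε : ℝ) (hε : ε ∈ Set.Ioo (0:ℝ) 1) :
    ∃ φ : ℕ → ℕ, StrictMono φ ∧ IsKBasic ((1 + ε) / η) (fun n => y (φ n)) := by
  obtain ⟨A, _, hA, hAy⟩ := hy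
  obtain ⟨hε0, hε1⟩ := hε
  set δ := ε * η / 4 with hδ
  have hδ0 : 0 < δ := by positivity
  set c : ℕ → ℝ := fun j => δ * A / 4 * (1 / 2) ^ j
  have hc (n m : ℕ) : ∑ j ∈ Ico n m, c j ≤ δ * A / 2 := by
    rw [← mul_sum]
    have := mul_le_mul_of_nonneg_left (sum_Ico_geometric_two_le n m) (by positivity : 0 ≤ δ * A / 4)
    linarith
  obtain ⟨φ, hφ, hnorm⟩ := exists_strictMono_forall_norming (fun g hg => hG0 g hg.1)
    (fun s => haveI := FiniteDimensional.span_of_finite ℝ (s.finite_toSet.image y)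
      exists_finset_norming_of_forall_exists_lt (fun x _ => hG.exists_mem_lt x) _ hδ0)
    (c := c) fun j => by positivity
  have hKτ : 1 ≤ (1 + ε) / η * (η - δ - δ) := by
    rw [div_mul_eq_mul_div, le_div_iff₀ hη0, hδ]
    nlinarith
  refine ⟨φ, hφ, isKBasic_of_forall_mul_norm_le (by positivity) hKτ fun a n m hnm =>
    mul_norm_sum_range_le_of_norming hA (fun j => (hAy (φ j)).1) hc (fun n v hv => ?_) a hnm⟩
  obtain ⟨g, hg, h⟩ := hnorm n v hv
  exact ⟨g, hg.2, h⟩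

/-- Kadec–Pełczyński type selection, part (a). -/
theorem stmt5 {X : Type*} [NormedAddCommGroup X] [NormedSpace ℝ X] [CompleteSpace X]
    (y : ℕ → X) (hy : Seminormalized y)
    (η : ℝ) (hη0 : 0 < η) (hη1 : η ≤ 1)
    (G : Submodule ℝ (X →L[ℝ] ℝ)) (hG : IsNorming η G)
    (hG0 : ∀ g ∈ G, Tendsto (fun n => g (y n)) atTop (𝓝 (0:ℝ)))
    (ε : ℝ) (hε : ε ∈ Set.Ioo (0:ℝ) 1) :
    ∃ φ : ℕ → ℕ, StrictMono φ ∧ IsKBasic ((1 + ε) / η) (fun n => y (φ n)) :=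
  stmt5_general y hy η hη0 G hG hG0 ε hε
end
end

section
/- Let X be a Banach space, let (y_n) be a seminormalized sequence in X, and let G be a subspace of X* that is 1-norming for X and satisfies g(y_n) → 0 as n → ∞ for every g ∈ G. Let E be a finite-dimensional subspace of X and let ε ∈ (0,1). Then for every n₀ ∈ ℕ there exists m ≥ n₀ such that ‖e‖ ≤ (1+ε)‖e + t·y_m‖ for every e ∈ E and every scalar t ∈ ℝ. -/
/-!
Fix `δ > 0` with `(1 + ε)(1 - 2δ) = 1`. The unit sphere of `E` is compact, so finitely many
functionals of norm `≤ 1` from `G` already `(1 - δ)`-norm it, and since `G` annihilates `(y_n)`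
in the limit all of them are tiny on `y_m` for `m` large. For a unit vector `u ∈ E`, if `|t|` is
large then `‖u + t y_m‖ ≥ |t| ‖y_m‖ - 1 ≥ 1` because `‖y_m‖` is bounded below; if `|t|` is small
then the functional norming `u` sees `u + t y_m` with size at least `1 - 2δ`.
-/

open Filter Topology

noncomputable section

section

variable {X : Type*} [NormedAddCommGroup X] [NormedSpace ℝ X]

theorem IsNorming.exists_lt_abs_apply {η : ℝ} {G : Submodule ℝ (X →L[ℝ] ℝ)}
    (hG : IsNorming η G) {x : X} {r : ℝ} (hr : r < η * ‖x‖) :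
    ∃ φ ∈ G, ‖φ‖ ≤ 1 ∧ r < |φ x| := by
  have hne : {r : ℝ | ∃ φ ∈ G, ‖φ‖ ≤ 1 ∧ r = |φ x|}.Nonempty :=
    ⟨0, 0, G.zero_mem, by simp, by simp⟩
  obtain ⟨_, ⟨φ, hφG, hφ, rfl⟩, hrφ⟩ := exists_lt_of_lt_csSup hne (hr.trans_le (hG x).1)
  exact ⟨φ, hφG, hφ, hrφ⟩

theorem IsNorming.exists_finite_lt_abs_apply {η : ℝ} {G : Submodule ℝ (X →L[ℝ] ℝ)}
    (hG : IsNorming η G) {K : Set X} (hK : IsCompact K) {r : ℝ}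
    (hr : ∀ x ∈ K, r < η * ‖x‖) :
    ∃ S : Set (X →L[ℝ] ℝ), S.Finite ∧ (∀ φ ∈ S, φ ∈ G ∧ ‖φ‖ ≤ 1) ∧
      ∀ x ∈ K, ∃ φ ∈ S, r < |φ x| := by
  have hopen : ∀ φ ∈ {φ : X →L[ℝ] ℝ | φ ∈ G ∧ ‖φ‖ ≤ 1}, IsOpen {x | r < |φ x|} :=
    fun φ _ => isOpen_lt continuous_const (continuous_abs.comp φ.continuous)
  have hcover : K ⊆ ⋃ φ ∈ {φ : X →L[ℝ] ℝ | φ ∈ G ∧ ‖φ‖ ≤ 1}, {x | r < |φ x|} := by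
    intro x hx
    obtain ⟨φ, hφG, hφ, hrφ⟩ := hG.exists_lt_abs_apply (hr x hx)
    exact Set.mem_biUnion ⟨hφG, hφ⟩ hrφ
  obtain ⟨S, hSG, hSfin, hSK⟩ := hK.elim_finite_subcover_image hopen hcover
  refine ⟨S, hSfin, hSG, fun x hx => ?_⟩
  simpa using hSK hx

theorem Submodule.isCompact_inter_sphere (E : Submodule ℝ X) [FiniteDimensional ℝ E] (r : ℝ) :
    IsCompact ((E : Set X) ∩ Metric.sphere 0 r) := by
  have : (E : Set X) ∩ Metric.sphere 0 r = Subtype.val '' Metric.sphere (0 : E) r := by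
    ext x
    constructor
    · rintro ⟨hxE, hx⟩
      exact ⟨⟨x, hxE⟩, by simpa using hx, rfl⟩
    · rintro ⟨u, hu, rfl⟩
      exact ⟨u.2, by simpa using hu⟩
  rw [this]
  exact (isCompact_sphere (0 : E) r).image continuous_subtype_val

theorem one_sub_two_mul_le_norm_add_smul {u v : X} {φ : X →L[ℝ] ℝ} {a δ : ℝ}
    (hu : ‖u‖ = 1) (ha : 0 < a) (hv : a ≤ ‖v‖) (hφ : ‖φ‖ ≤ 1)
    (hφu : 1 - δ < |φ u|) (hφv : |φ v| < δ * a / 2) (t : ℝ) :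
    1 - 2 * δ ≤ ‖u + t • v‖ := by
  have hδ : 0 < δ := by nlinarith [abs_nonneg (φ v)]
  by_cases ht : |t| ≤ 2 / a
  · have htφv : |t * φ v| ≤ δ := by
      rw [abs_mul]
      calc |t| * |φ v| ≤ 2 / a * (δ * a / 2) := by gcongr
        _ = δ := by field_simp
    have hφw : |φ u + t * φ v| ≤ ‖u + t • v‖ := by
      simpa using φ.le_of_opNorm_le hφ (u + t • v)
    have hφu_le := abs_sub (φ u + t * φ v) (t * φ v)
    rw [add_sub_cancel_right] at hφu_le
    linarith
  · have h2 : 2 ≤ |t| * ‖v‖ := by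
      calc (2 : ℝ) = 2 / a * a := by field_simp
        _ ≤ |t| * ‖v‖ := by gcongr; exact (not_le.mp ht).le
    have hreverse := norm_sub_norm_le (t • v) (-u)
    rw [sub_neg_eq_add, add_comm, norm_neg, norm_smul, Real.norm_eq_abs, hu] at hreverse
    linarith

theorem Submodule.norm_le_mul_norm_add_smul_of_norm_eq_one (E : Submodule ℝ X) {v : X} {C : ℝ}
    (hC : 0 ≤ C) (h : ∀ u ∈ E, ‖u‖ = 1 → ∀ t : ℝ, 1 ≤ C * ‖u + t • v‖) :
    ∀ e ∈ E, ∀ t : ℝ, ‖e‖ ≤ C * ‖e + t • v‖ := by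
  intro e he t
  rcases eq_or_ne e 0 with rfl | hne
  · simpa using by positivity
  have hpos : 0 < ‖e‖ := norm_pos_iff.mpr hne
  have hscale : e + t • v = ‖e‖ • (‖e‖⁻¹ • e + (‖e‖⁻¹ * t) • v) := by
    rw [smul_add, smul_smul, smul_smul, mul_inv_cancel₀ hpos.ne', ← mul_assoc,
      mul_inv_cancel₀ hpos.ne', one_smul, one_mul]
  have hunit := h _ (E.smul_mem ‖e‖⁻¹ he)
    (by rw [norm_smul, Real.norm_of_nonneg (inv_nonneg.2 hpos.le), inv_mul_cancel₀ hpos.ne'])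
    (‖e‖⁻¹ * t)
  rw [hscale, norm_smul, Real.norm_of_nonneg hpos.le]
  calc ‖e‖ = ‖e‖ * 1 := (mul_one _).symm
    _ ≤ ‖e‖ * (C * ‖‖e‖⁻¹ • e + (‖e‖⁻¹ * t) • v‖) := by gcongr
    _ = C * (‖e‖ * ‖‖e‖⁻¹ • e + (‖e‖⁻¹ * t) • v‖) := by ring

end

theorem stmt7_general {X : Type*} [NormedAddCommGroup X] [NormedSpace ℝ X]
    (y : ℕ → X) (hy : Seminormalized y)
    (G : Submodule ℝ (X →L[ℝ] ℝ)) (hG : IsNorming 1 G)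
    (hG0 : ∀ g ∈ G, Tendsto (fun n => g (y n)) atTop (𝓝 (0:ℝ)))
    (E : Submodule ℝ X) (hE : FiniteDimensional ℝ E)
    (ε : ℝ) (hε : ε ∈ Set.Ioo (0:ℝ) 1) (n₀ : ℕ) :
    ∃ m : ℕ, n₀ ≤ m ∧ ∀ e ∈ E, ∀ t : ℝ, ‖e‖ ≤ (1 + ε) * ‖e + t • y m‖ := by
  obtain ⟨A, _, hA, hyA⟩ := hy
  have hε0 : 0 < ε := hε.1
  set δ := ε / (2 * (1 + ε))
  have hδ : 0 < δ := by positivity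
  obtain ⟨S, hSfin, hSG, hSE⟩ := hG.exists_finite_lt_abs_apply (E.isCompact_inter_sphere 1)
    (r := 1 - δ) fun x hx => by rw [one_mul, mem_sphere_zero_iff_norm.mp hx.2]; linarith
  have hsmall : ∀ᶠ n in atTop, ∀ φ ∈ S, |φ (y n)| < δ * A / 2 :=
    (hSfin.eventually_all).2 fun φ hφ => by
      simpa using (hG0 φ (hSG φ hφ).1).abs.eventually_lt_const (by rw [abs_zero]; positivity)
  obtain ⟨m, hm, hmS⟩ := ((eventually_ge_atTop n₀).and hsmall).exists
  refine ⟨m, hm, E.norm_le_mul_norm_add_smul_of_norm_eq_one (by positivity) ?_⟩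
  intro u hu hu1 t
  obtain ⟨φ, hφS, hφu⟩ := hSE u ⟨hu, mem_sphere_zero_iff_norm.mpr hu1⟩
  calc (1 : ℝ) = (1 + ε) * (1 - 2 * δ) := by simp only [δ]; field_simp; ring
    _ ≤ (1 + ε) * ‖u + t • y m‖ := by
      gcongr
      exact one_sub_two_mul_le_norm_add_smul hu1 hA (hyA m).1 (hSG φ hφS).2 hφu (hmS φ hφS) t

/-- the basic one-step selection lemma, for a `1`-norming subspace `G` and a
finite-dimensional subspace `E`. -/
theorem stmt7 {X : Type*} [NormedAddCommGroup X] [NormedSpace ℝ X] [CompleteSpace X]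
    (y : ℕ → X) (hy : Seminormalized y)
    (G : Submodule ℝ (X →L[ℝ] ℝ)) (hG : IsNorming 1 G)
    (hG0 : ∀ g ∈ G, Tendsto (fun n => g (y n)) atTop (𝓝 (0:ℝ)))
    (E : Submodule ℝ X) (hE : FiniteDimensional ℝ E)
    (ε : ℝ) (hε : ε ∈ Set.Ioo (0:ℝ) 1) (n₀ : ℕ) :
    ∃ m : ℕ, n₀ ≤ m ∧ ∀ e ∈ E, ∀ t : ℝ, ‖e‖ ≤ (1 + ε) * ‖e + t • y m‖ :=
  stmt7_general y hy G hG hG0 E hE ε hε n₀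
end
end

section
/- Let X be a Banach space and let (x_n) be a seminormalized sequence in X that is K-basic (K ≥ 1) and λ-dominates the summing basis of c₀ (λ > 0). Fix ε ∈ (0,1). For each n ≥ 1 let (λ_k^{(n+1)})_{k≥n+1} be positive reals such that α_n := 1 − ∑_{k=n+1}^∞ λ_k^{(n+1)} satisfies 1/2 ≤ α_n < 1 for every n, the sequence (α_n) is nondecreasing with α_n → 1, and ∑_{n=1}^∞ ∑_{k=n+1}^∞ λ_k^{(n+1)} < ε·inf_n‖x_n‖/(4K·sup_n‖x_n‖). Define z_n := α_n x_n + ∑_{k=n+1}^∞ λ_k^{(n+1)} x_k (the series converging absolutely). Then the sequence (z_n) is seminormalized and basic, i.e. there exists K' ≥ 1 such that (z_n) is K'-basic. -/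
/-! Put `y_n = α_n x_n`, `a = inf ‖x_n‖`, `b = sup ‖x_n‖`. Rescaling keeps `(y_n)` `K`-basic, and
`‖y_n‖ ≥ a / 2`, so every coefficient of a partial sum is controlled by the sum:
`|c_i| ‖y_i‖ ≤ 2K ‖∑_{j<m} c_j y_j‖`. The perturbations `z_n - y_n = ∑_k Λ n k • x_k` have total
norm at most `b ∑_n ∑_k Λ n k < ε a / (4K)`, hence `‖∑ c_i (z_i - y_i)‖ ≤ ε ‖∑ c_i y_i‖`. This is
the principle of small perturbations: `(z_n)` is `(1 + ε) K / (1 - ε)`-basic, and the same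
bound keeps `‖z_n‖` between `a / 4` and `b + a / 4`. -/

open Filter Topology

noncomputable section

/-- `(x_n)` `λ`-dominates the summing basis of `c₀`:
`|∑_{k ≤ i < n} a_i| ≤ λ ‖∑_{i<n} a_i x_i‖` for all `k ≤ n`. -/
def DomSumming {X : Type*} [NormedAddCommGroup X] [NormedSpace ℝ X]
    (lam : ℝ) (x : ℕ → X) : Prop :=
  ∀ (a : ℕ → ℝ) (k n : ℕ), k ≤ n →
    |∑ i ∈ Finset.Ico k n, a i| ≤ lam * ‖∑ i ∈ Finset.range n, a i • x i‖

open Finset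

section Seminormalized

variable {X : Type*} [NormedAddCommGroup X]

theorem Seminormalized.iInf_norm_pos {x : ℕ → X} (hx : Seminormalized x) :
    0 < ⨅ n, ‖x n‖ := by
  obtain ⟨A, _, hA, hAx⟩ := hx
  exact hA.trans_le (le_ciInf fun n => (hAx n).1)

theorem Seminormalized.bddAbove_range_norm {x : ℕ → X} (hx : Seminormalized x) :
    BddAbove (Set.range fun n => ‖x n‖) := by
  obtain ⟨_, B, _, hxB⟩ := hx
  exact ⟨B, Set.forall_mem_range.2 fun n => (hxB n).2⟩

theorem Seminormalized.of_norm_sub_le {y z : ℕ → X} {A B r : ℝ}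
    (hy : ∀ n, A ≤ ‖y n‖ ∧ ‖y n‖ ≤ B) (hr : r < A) (hzy : ∀ n, ‖z n - y n‖ ≤ r) :
    Seminormalized z :=
  ⟨A - r, B + r, sub_pos.2 hr, fun n =>
    ⟨by linarith [norm_le_norm_add_norm_sub (z n) (y n), (hy n).1, hzy n],
      by linarith [norm_le_norm_add_norm_sub' (z n) (y n), (hy n).2, hzy n]⟩⟩

end Seminormalized

section Basic

variable {X : Type*} [NormedAddCommGroup X] [NormedSpace ℝ X]

theorem norm_tsum_smul_le {ι : Type*} {c : ι → ℝ} {x : ι → X} {b : ℝ} (hc : ∀ k, 0 ≤ c k)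
    (hs : Summable c) (hx : ∀ k, ‖x k‖ ≤ b) : ‖∑' k, c k • x k‖ ≤ b * ∑' k, c k :=
  tsum_of_norm_bounded (hs.hasSum.mul_left b) fun k => by
    rw [norm_smul, Real.norm_of_nonneg (hc k), mul_comm]
    exact mul_le_mul_of_nonneg_right (hx k) (hc k)

theorem IsKBasic.smul {K : ℝ} {x : ℕ → X} (hx : IsKBasic K x) (α : ℕ → ℝ) :
    IsKBasic K fun i => α i • x i := by
  intro a n m hnm
  simpa only [smul_smul] using hx (fun i => a i * α i) n m hnm

theorem IsKBasic.abs_mul_norm_le {K : ℝ} {y : ℕ → X} (hy : IsKBasic K y) (a : ℕ → ℝ)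
    {i m : ℕ} (him : i < m) : |a i| * ‖y i‖ ≤ 2 * K * ‖∑ j ∈ range m, a j • y j‖ := by
  have hsucc := hy a (i + 1) m him
  have hi := hy a i m him.le
  calc |a i| * ‖y i‖
      = ‖∑ j ∈ range (i + 1), a j • y j - ∑ j ∈ range i, a j • y j‖ := by
        rw [sum_range_succ, add_sub_cancel_left, norm_smul, Real.norm_eq_abs]
    _ ≤ ‖∑ j ∈ range (i + 1), a j • y j‖ + ‖∑ j ∈ range i, a j • y j‖ := norm_sub_le _ _
    _ ≤ 2 * K * ‖∑ j ∈ range m, a j • y j‖ := by linarith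

theorem IsKBasic.norm_sum_smul_sub_le {K c : ℝ} {y z : ℕ → X} (hy : IsKBasic K y)
    (hK : 0 ≤ K) (hc : 0 < c) (hyc : ∀ i, c ≤ ‖y i‖) (hs : Summable fun i => ‖z i - y i‖)
    (a : ℕ → ℝ) (m : ℕ) :
    ‖∑ i ∈ range m, a i • z i - ∑ i ∈ range m, a i • y i‖ ≤
      2 * K / c * (∑' i, ‖z i - y i‖) * ‖∑ i ∈ range m, a i • y i‖ := by
  set Y := ‖∑ i ∈ range m, a i • y i‖
  have hcoeff : ∀ i ∈ range m, |a i| ≤ 2 * K / c * Y := fun i hi => by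
    rw [div_mul_eq_mul_div, le_div_iff₀ hc]
    exact (mul_le_mul_of_nonneg_left (hyc i) (abs_nonneg _)).trans
      (hy.abs_mul_norm_le a (mem_range.1 hi))
  calc ‖∑ i ∈ range m, a i • z i - ∑ i ∈ range m, a i • y i‖
      = ‖∑ i ∈ range m, a i • (z i - y i)‖ := by simp only [smul_sub, sum_sub_distrib]
    _ ≤ ∑ i ∈ range m, |a i| * ‖z i - y i‖ :=
        norm_sum_le_of_le _ fun i _ => by rw [norm_smul, Real.norm_eq_abs]
    _ ≤ ∑ i ∈ range m, 2 * K / c * Y * ‖z i - y i‖ :=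
        sum_le_sum fun i hi => mul_le_mul_of_nonneg_right (hcoeff i hi) (norm_nonneg _)
    _ = 2 * K / c * Y * ∑ i ∈ range m, ‖z i - y i‖ := (mul_sum ..).symm
    _ ≤ 2 * K / c * Y * ∑' i, ‖z i - y i‖ :=
        mul_le_mul_of_nonneg_left (hs.sum_le_tsum _ fun i _ => norm_nonneg _) (by positivity)
    _ = 2 * K / c * (∑' i, ‖z i - y i‖) * Y := by ring

theorem IsKBasic.of_summable_norm_sub {K c δ : ℝ} {y z : ℕ → X} (hy : IsKBasic K y)
    (hK : 0 ≤ K) (hc : 0 < c) (hyc : ∀ i, c ≤ ‖y i‖) (hs : Summable fun i => ‖z i - y i‖)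
    (hδ : 2 * K * ∑' i, ‖z i - y i‖ ≤ δ * c) (hδ1 : δ < 1) :
    IsKBasic ((1 + δ) * K / (1 - δ)) z := by
  intro a n m hnm
  have hδ0 : 0 ≤ δ := by
    have : 0 ≤ 2 * K * ∑' i, ‖z i - y i‖ := by positivity
    exact nonneg_of_mul_nonneg_left (this.trans hδ) hc
  have hδ' : 2 * K / c * ∑' i, ‖z i - y i‖ ≤ δ := by
    rwa [div_mul_eq_mul_div, div_le_iff₀ hc]
  have hpert : ∀ m, ‖∑ i ∈ range m, a i • z i - ∑ i ∈ range m, a i • y i‖ ≤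
      δ * ‖∑ i ∈ range m, a i • y i‖ := fun m =>
    (hy.norm_sum_smul_sub_le hK hc hyc hs a m).trans
      (mul_le_mul_of_nonneg_right hδ' (norm_nonneg _))
  have hZn : ‖∑ i ∈ range n, a i • z i‖ ≤ (1 + δ) * K * ‖∑ i ∈ range m, a i • y i‖ := by
    nlinarith [norm_le_norm_add_norm_sub' (∑ i ∈ range n, a i • z i) (∑ i ∈ range n, a i • y i),
      hpert n, hy a n m hnm]
  have hZm : (1 - δ) * ‖∑ i ∈ range m, a i • y i‖ ≤ ‖∑ i ∈ range m, a i • z i‖ := by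
    linarith [norm_le_norm_add_norm_sub (∑ i ∈ range m, a i • z i) (∑ i ∈ range m, a i • y i),
      hpert m]
  rw [div_mul_eq_mul_div, le_div_iff₀ (sub_pos.2 hδ1)]
  nlinarith [mul_le_mul_of_nonneg_left hZm (by positivity : 0 ≤ (1 + δ) * K)]

end Basic

theorem stmt8_general {X : Type*} [NormedAddCommGroup X] [NormedSpace ℝ X]
    (x : ℕ → X) (hsem : Seminormalized x)
    (K ε : ℝ) (hK : 1 ≤ K)
    (hbasic : IsKBasic K x)
    (hε : ε ∈ Set.Ioo (0:ℝ) 1)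
    (Λ : ℕ → ℕ → ℝ)
    (hpos : ∀ n k, n < k → 0 < Λ n k)
    (hzero : ∀ n k, k ≤ n → Λ n k = 0)
    (hsum : ∀ n, Summable (Λ n))
    (α : ℕ → ℝ)
    (hα12 : ∀ n, 1 / 2 ≤ α n) (hα1 : ∀ n, α n < 1)
    (htot : Summable fun n => ∑' k, Λ n k)
    (hbound : (∑' n, ∑' k, Λ n k) < ε * (⨅ n, ‖x n‖) / (4 * K * ⨆ n, ‖x n‖))
    (z : ℕ → X) (hz : ∀ n, z n = α n • x n + ∑' k, Λ n k • x k) :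
    Seminormalized z ∧ ∃ K' : ℝ, 1 ≤ K' ∧ IsKBasic K' z := by
  set a := ⨅ n, ‖x n‖
  set b := ⨆ n, ‖x n‖
  have ha : 0 < a := hsem.iInf_norm_pos
  have hxa : ∀ n, a ≤ ‖x n‖ := ciInf_le ⟨0, Set.forall_mem_range.2 fun n => norm_nonneg _⟩
  have hxb : ∀ n, ‖x n‖ ≤ b := le_ciSup hsem.bddAbove_range_norm
  have hΛ : ∀ n k, 0 ≤ Λ n k := fun n k =>
    (le_or_gt k n).elim (fun h => (hzero n k h).ge) fun h => (hpos n k h).le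
  have hy : ∀ n, a / 2 ≤ ‖α n • x n‖ ∧ ‖α n • x n‖ ≤ b := fun n => by
    rw [norm_smul, Real.norm_of_nonneg (by linarith [hα12 n])]
    constructor <;> nlinarith [hα12 n, hα1 n, hxa n, hxb n, norm_nonneg (x n)]
  have hzy : ∀ n, ‖z n - α n • x n‖ ≤ b * ∑' k, Λ n k := fun n => by
    rw [hz n, add_sub_cancel_left]
    exact norm_tsum_smul_le (hΛ n) (hsum n) hxb
  have hs : Summable fun n => ‖z n - α n • x n‖ :=
    (htot.mul_left b).of_nonneg_of_le (fun _ => norm_nonneg _) hzy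
  have hb : 0 < b := ha.trans_le ((hxa 0).trans (hxb 0))
  have hsmall : 4 * K * ∑' n, ‖z n - α n • x n‖ < ε * a := calc
    _ ≤ 4 * K * (b * ∑' n, ∑' k, Λ n k) := mul_le_mul_of_nonneg_left
      ((hs.tsum_le_tsum hzy (htot.mul_left b)).trans_eq tsum_mul_left) (by positivity)
    _ < 4 * K * (b * (ε * a / (4 * K * b))) :=
      mul_lt_mul_of_pos_left (mul_lt_mul_of_pos_left hbound hb) (by positivity)
    _ = ε * a := by field_simp
  have hs0 : 0 ≤ ∑' n, ‖z n - α n • x n‖ := tsum_nonneg fun _ => norm_nonneg _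
  refine ⟨Seminormalized.of_norm_sub_le hy (by nlinarith [hε.2])
    fun n => hs.le_tsum n fun m _ => norm_nonneg _, (1 + ε) * K / (1 - ε), ?_,
    (hbasic.smul α).of_summable_norm_sub (by linarith) (half_pos ha) (fun n => (hy n).1) hs
      (by linarith) hε.2⟩
  rw [le_div_iff₀ (by linarith [hε.2])]
  nlinarith [hε.1]

theorem stmt8 {X : Type*} [NormedAddCommGroup X] [NormedSpace ℝ X] [CompleteSpace X]
    (x : ℕ → X) (hsem : Seminormalized x)
    (K lam ε : ℝ) (hK : 1 ≤ K) (hlam : 0 < lam)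
    (hbasic : IsKBasic K x) (hdom : DomSumming lam x)
    (hε : ε ∈ Set.Ioo (0:ℝ) 1)
    (Λ : ℕ → ℕ → ℝ)
    (hpos : ∀ n k, n < k → 0 < Λ n k)
    (hzero : ∀ n k, k ≤ n → Λ n k = 0)
    (hsum : ∀ n, Summable (Λ n))
    (α : ℕ → ℝ) (hα : ∀ n, α n = 1 - ∑' k, Λ n k)
    (hα12 : ∀ n, 1 / 2 ≤ α n) (hα1 : ∀ n, α n < 1)
    (hαmono : Monotone α) (hαlim : Tendsto α atTop (𝓝 (1:ℝ)))
    (htot : Summable fun n => ∑' k, Λ n k)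
    (hbound : (∑' n, ∑' k, Λ n k) < ε * (⨅ n, ‖x n‖) / (4 * K * ⨆ n, ‖x n‖))
    (hzs : ∀ n, Summable fun k => Λ n k • x k)
    (z : ℕ → X) (hz : ∀ n, z n = α n • x n + ∑' k, Λ n k • x k) :
    Seminormalized z ∧ ∃ K' : ℝ, 1 ≤ K' ∧ IsKBasic K' z :=
  stmt8_general x hsem K ε hK hbasic hε Λ hpos hzero hsum α hα12 hα1 htot hbound z hz
end
end

section
/- Let X be a Banach space and let (x_n) be a seminormalized sequence in X that is K-basic (K ≥ 1) and λ-dominates the summing basis of c₀ (λ > 0). Fix ε ∈ (0,1). For each n ≥ 1 let (λ_k^{(n+1)})_{k≥n+1} be positive reals such that α_n := 1 − ∑_{k=n+1}^∞ λ_k^{(n+1)} satisfies 1/2 ≤ α_n < 1 for every n, the sequence (α_n) is nondecreasing with α_n → 1, and ∑_{n=1}^∞ ∑_{k=n+1}^∞ λ_k^{(n+1)} < ε·inf_n‖x_n‖/(4K·sup_n‖x_n‖). Define z_n := α_n x_n + ∑_{k=n+1}^∞ λ_k^{(n+1)} x_k. Then for every finitely supported sequence of scalars (a_i) one has ‖∑_{i=1}^∞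 a_i z_i‖ ≤ (2K + ε)‖∑_{i=1}^∞ a_i x_i‖. -/
/-!
Split `∑ aᵢ zᵢ` into `∑ αᵢ aᵢ xᵢ` and the perturbation `∑ aᵢ ∑ₖ λ_k^{(i+1)} x_k`.
Since `α` is monotone with values in `[1/2, 1)`, Abel summation writes the first sum through the
partial sums `∑_{i<m} aᵢ xᵢ`, `m ≤ n`, with total weight at most `2`, giving `2K‖∑ aᵢ xᵢ‖`.
For the perturbation, `K`-basicness bounds every coefficient by `|aᵢ| ≤ 2K‖∑ aᵢ xᵢ‖ / inf ‖xₙ‖`,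
and the smallness of `∑ₙ ∑ₖ λ_k^{(n+1)}` makes it at most `ε/2 · ‖∑ aᵢ xᵢ‖`.
-/

open Filter Topology

noncomputable section

open Finset

section Normed

variable {X : Type*} [NormedAddCommGroup X]

theorem Seminormalized.norm_le_iSup {x : ℕ → X} (hx : Seminormalized x) (k : ℕ) :
    ‖x k‖ ≤ ⨆ n, ‖x n‖ := by
  obtain ⟨A, B, -, hAB⟩ := hx
  exact le_ciSup ⟨B, by rintro _ ⟨n, rfl⟩; exact (hAB n).2⟩ k

theorem iInf_norm_le (x : ℕ → X) (k : ℕ) : ⨅ n, ‖x n‖ ≤ ‖x k‖ :=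
  ciInf_le ⟨0, by rintro _ ⟨n, rfl⟩; exact norm_nonneg _⟩ k

variable [NormedSpace ℝ X]

theorem norm_tsum_smul_le_of_norm_le {ι : Type*} {t : ι → ℝ} {x : ι → X} {B : ℝ}
    (ht : ∀ k, 0 ≤ t k) (hts : Summable t) (hxB : ∀ k, ‖x k‖ ≤ B) :
    ‖∑' k, t k • x k‖ ≤ B * ∑' k, t k := calc
  _ ≤ ∑' k, B * t k := tsum_of_norm_bounded (hts.mul_left B).hasSum fun k => by
      rw [norm_smul, Real.norm_of_nonneg (ht k), mul_comm]
      exact mul_le_mul_of_nonneg_right (hxB k) (ht k)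
  _ = B * ∑' k, t k := tsum_mul_left

theorem norm_sum_smul_le_of_abs_le {a s : ℕ → ℝ} {w : ℕ → X} {M : ℝ} (n : ℕ) (hM : 0 ≤ M)
    (ha : ∀ i < n, |a i| ≤ M) (hw : ∀ i, ‖w i‖ ≤ s i) (hs : Summable s) :
    ‖∑ i ∈ range n, a i • w i‖ ≤ M * ∑' i, s i := calc
  _ ≤ ∑ i ∈ range n, M * s i := (norm_sum_le _ _).trans <| sum_le_sum fun i hi => by
      rw [norm_smul, Real.norm_eq_abs]
      exact mul_le_mul (ha i (mem_range.1 hi)) (hw i) (norm_nonneg _) hM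
  _ = M * ∑ i ∈ range n, s i := (mul_sum _ _ _).symm
  _ ≤ M * ∑' i, s i :=
      mul_le_mul_of_nonneg_left (hs.sum_le_tsum _ fun i _ => (norm_nonneg _).trans (hw i)) hM

namespace IsKBasic

variable {K : ℝ} {x : ℕ → X}

theorem norm_smul_le (hx : IsKBasic K x) (a : ℕ → ℝ) {i n : ℕ} (hi : i < n) :
    ‖a i • x i‖ ≤ 2 * K * ‖∑ j ∈ range n, a j • x j‖ := by
  have hdiff : a i • x i = ∑ j ∈ range (i + 1), a j • x j - ∑ j ∈ range i, a j • x j := by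
    rw [sum_range_succ, add_sub_cancel_left]
  calc ‖a i • x i‖
      ≤ ‖∑ j ∈ range (i + 1), a j • x j‖ + ‖∑ j ∈ range i, a j • x j‖ := hdiff ▸ norm_sub_le _ _
    _ ≤ K * ‖∑ j ∈ range n, a j • x j‖ + K * ‖∑ j ∈ range n, a j • x j‖ :=
      add_le_add (hx a _ _ hi) (hx a _ _ hi.le)
    _ = 2 * K * ‖∑ j ∈ range n, a j • x j‖ := by ring

theorem abs_le_of_le_norm (hx : IsKBasic K x) (a : ℕ → ℝ) {A : ℝ} (hA : 0 < A) {i n : ℕ}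
    (hxA : A ≤ ‖x i‖) (hi : i < n) :
    |a i| ≤ 2 * K * ‖∑ j ∈ range n, a j • x j‖ / A := by
  rw [le_div_iff₀ hA]
  calc |a i| * A ≤ |a i| * ‖x i‖ := mul_le_mul_of_nonneg_left hxA (abs_nonneg _)
    _ = ‖a i • x i‖ := by rw [norm_smul, Real.norm_eq_abs]
    _ ≤ _ := hx.norm_smul_le a hi

theorem norm_sum_smul_le_of_monotone (hx : IsKBasic K x) (a : ℕ → ℝ) (n : ℕ) {α : ℕ → ℝ}
    (hα : Monotone α) (h0 : 0 ≤ α 0) (h1 : ∀ i, α i ≤ 1) :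
    ‖∑ i ∈ range n, α i • a i • x i‖ ≤ 2 * K * ‖∑ i ∈ range n, a i • x i‖ := by
  set S : ℕ → X := fun m => ∑ i ∈ range m, a i • x i
  have hS : ∀ m ≤ n, ‖S m‖ ≤ K * ‖S n‖ := fun m hm => hx a m n hm
  have hKS : 0 ≤ K * ‖S n‖ := (norm_nonneg _).trans (hS n le_rfl)
  have hlast : ‖α (n - 1) • S n‖ ≤ K * ‖S n‖ := by
    rw [norm_smul, Real.norm_of_nonneg (h0.trans (hα (Nat.zero_le _)))]
    exact (mul_le_of_le_one_left (norm_nonneg _) (h1 _)).trans (hS n le_rfl)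
  have hincr : ‖∑ i ∈ range (n - 1), (α (i + 1) - α i) • S (i + 1)‖ ≤ K * ‖S n‖ := calc
    _ ≤ ∑ i ∈ range (n - 1), (α (i + 1) - α i) * (K * ‖S n‖) := by
        refine (norm_sum_le _ _).trans (sum_le_sum fun i hi => ?_)
        have hαi : 0 ≤ α (i + 1) - α i := sub_nonneg.2 (hα i.le_succ)
        rw [norm_smul, Real.norm_of_nonneg hαi]
        exact mul_le_mul_of_nonneg_left (hS _ (by have := mem_range.1 hi; omega)) hαi
    _ = (α (n - 1) - α 0) * (K * ‖S n‖) := by rw [← sum_mul, sum_range_sub]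
    _ ≤ K * ‖S n‖ := mul_le_of_le_one_left hKS (by linarith [h1 (n - 1)])
  calc ‖∑ i ∈ range n, α i • a i • x i‖
      = ‖α (n - 1) • S n - ∑ i ∈ range (n - 1), (α (i + 1) - α i) • S (i + 1)‖ := by
        rw [sum_range_by_parts]
    _ ≤ K * ‖S n‖ + K * ‖S n‖ := (norm_sub_le _ _).trans (add_le_add hlast hincr)
    _ = 2 * K * ‖S n‖ := by ring

end IsKBasic

end Normed

theorem stmt9_general {X : Type*} [NormedAddCommGroup X] [NormedSpace ℝ X]
    (x : ℕ → X) (hsem : Seminormalized x)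
    (K ε : ℝ) (hK : 1 ≤ K)
    (hbasic : IsKBasic K x)
    (hε : ε ∈ Set.Ioo (0:ℝ) 1)
    (Λ : ℕ → ℕ → ℝ)
    (hpos : ∀ n k, n < k → 0 < Λ n k)
    (hzero : ∀ n k, k ≤ n → Λ n k = 0)
    (hsum : ∀ n, Summable (Λ n))
    (α : ℕ → ℝ)
    (hα12 : ∀ n, 1 / 2 ≤ α n) (hα1 : ∀ n, α n < 1)
    (hαmono : Monotone α)
    (htot : Summable fun n => ∑' k, Λ n k)
    (hbound : (∑' n, ∑' k, Λ n k) < ε * (⨅ n, ‖x n‖) / (4 * K * ⨆ n, ‖x n‖))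
    (z : ℕ → X) (hz : ∀ n, z n = α n • x n + ∑' k, Λ n k • x k) :
    ∀ (n : ℕ) (a : ℕ → ℝ),
      ‖∑ i ∈ Finset.range n, a i • z i‖ ≤ (2 * K + ε) * ‖∑ i ∈ Finset.range n, a i • x i‖ := by
  intro n a
  set A := ⨅ n, ‖x n‖
  set B := ⨆ n, ‖x n‖
  set S := ‖∑ i ∈ Finset.range n, a i • x i‖
  set T := ∑' i, ∑' k, Λ i k
  have hA : 0 < A := hsem.iInf_norm_pos
  have hB : 0 < B := hA.trans_le ((iInf_norm_le x 0).trans (hsem.norm_le_iSup 0))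
  have hΛ : ∀ i k, 0 ≤ Λ i k := fun i k =>
    (le_or_gt k i).elim (fun h => (hzero i k h).ge) fun h => (hpos i k h).le
  have hsplit : ∑ i ∈ range n, a i • z i
      = ∑ i ∈ range n, α i • a i • x i + ∑ i ∈ range n, a i • ∑' k, Λ i k • x k := by
    rw [← sum_add_distrib]
    exact sum_congr rfl fun i _ => by rw [hz i, smul_add, smul_comm]
  have hmain : ‖∑ i ∈ range n, α i • a i • x i‖ ≤ 2 * K * S :=
    hbasic.norm_sum_smul_le_of_monotone a n hαmono (by linarith [hα12 0]) fun i => (hα1 i).le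
  have hpert : ‖∑ i ∈ range n, a i • ∑' k, Λ i k • x k‖ ≤ 2 * K * S / A * (B * T) := by
    rw [← tsum_mul_left]
    exact norm_sum_smul_le_of_abs_le n (by positivity)
      (fun i hi => hbasic.abs_le_of_le_norm a hA (iInf_norm_le x i) hi)
      (fun i => norm_tsum_smul_le_of_norm_le (hΛ i) (hsum i) hsem.norm_le_iSup)
      (htot.mul_left B)
  have hT : T * (4 * K * B) ≤ ε * A := ((lt_div_iff₀ (by positivity)).1 hbound).le
  calc ‖∑ i ∈ range n, a i • z i‖
      ≤ 2 * K * S + 2 * K * S / A * (B * T) :=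
        hsplit ▸ (norm_add_le _ _).trans (add_le_add hmain hpert)
    _ = 2 * K * S + S / (2 * A) * (T * (4 * K * B)) := by field_simp; ring
    _ ≤ 2 * K * S + S / (2 * A) * (ε * A) := by gcongr
    _ = 2 * K * S + ε / 2 * S := by field_simp
    _ ≤ (2 * K + ε) * S := by nlinarith [hε.1, norm_nonneg (∑ i ∈ range n, a i • x i)]

theorem stmt9 {X : Type*} [NormedAddCommGroup X] [NormedSpace ℝ X] [CompleteSpace X]
    (x : ℕ → X) (hsem : Seminormalized x)
    (K lam ε : ℝ) (hK : 1 ≤ K) (hlam : 0 < lam)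
    (hbasic : IsKBasic K x) (hdom : DomSumming lam x)
    (hε : ε ∈ Set.Ioo (0:ℝ) 1)
    (Λ : ℕ → ℕ → ℝ)
    (hpos : ∀ n k, n < k → 0 < Λ n k)
    (hzero : ∀ n k, k ≤ n → Λ n k = 0)
    (hsum : ∀ n, Summable (Λ n))
    (α : ℕ → ℝ) (hα : ∀ n, α n = 1 - ∑' k, Λ n k)
    (hα12 : ∀ n, 1 / 2 ≤ α n) (hα1 : ∀ n, α n < 1)
    (hαmono : Monotone α) (hαlim : Tendsto α atTop (𝓝 (1:ℝ)))
    (htot : Summable fun n => ∑' k, Λ n k)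
    (hbound : (∑' n, ∑' k, Λ n k) < ε * (⨅ n, ‖x n‖) / (4 * K * ⨆ n, ‖x n‖))
    (hzs : ∀ n, Summable fun k => Λ n k • x k)
    (z : ℕ → X) (hz : ∀ n, z n = α n • x n + ∑' k, Λ n k • x k) :
    ∀ (n : ℕ) (a : ℕ → ℝ),
      ‖∑ i ∈ Finset.range n, a i • z i‖ ≤ (2 * K + ε) * ‖∑ i ∈ Finset.range n, a i • x i‖ :=
  stmt9_general x hsem K ε hK hbasic hε Λ hpos hzero hsum α hα12 hα1 hαmono htot hbound z hz
end
end
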